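/- SSP property of the four-stage family of Theorem 5.2: for every γ with 1/6 ≤ γ ≤ 1/2, the explicit four-stage Runge–Kutta method with coefficient matrix A ∈ ℝ^{4×4} given by a₂₁ = 1/2, a₃₁ = a₃₂ = 1/2, a₄₁ = a₄₂ = a₄₃ = γ (all other entries zero) and weights b = ((8γ−1)/(12γ), 1/6, 1/6, 1/(12γ)) satisfies the absolute monotonicity conditions with r = 2: the matrix I + rA is invertible, K(I + rA)^{-1} ≥ 0 componentwise, and e₅ − r·K(I + rA)^{-1}e₄ ≥ 0 componentwise, where K ∈ ℝ^{5×4} is the matrix whose first four rows are A and whose last row is bᵀ, and e₄ ∈ ℝ⁴, e₅ ∈ ℝ⁵ are all-ones vectors. Hence the method has SSP coefficient at least 2. -/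

import Mathlib

/-!
For `A` in the family, `I + 2A` has an explicit, nearly bidiagonal inverse `R`, and
`K R` is very sparse: its stage rows carry the single entries `1/2, 1/2, γ`, and its last row is
`((6γ - 1)/(12γ), 0, 0, 1/(12γ))`. So `K R ≥ 0` amounts to `γ ≥ 1/6`, and the row sums of `2 K R`
are `0, 1, 1, 2γ, 1`, which are at most `1` exactly when `γ ≤ 1/2`.
-/

open Finset in
/-- The matrix stacking `A` on top of `bᵀ`. -/
def rkStack {s : ℕ} (A : Matrix (Fin s) (Fin s) ℝ) (b : Fin s → ℝ) :
    Matrix (Fin (s + 1)) (Fin s) ℝ :=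
  Matrix.of fun i j => if h : (i : ℕ) < s then A ⟨i, h⟩ j else b j

open Matrix

section rkStack

variable {s : ℕ} (A : Matrix (Fin s) (Fin s) ℝ) (b : Fin s → ℝ)

@[simp]
theorem rkStack_castSucc (i : Fin s) : rkStack A b i.castSucc = A i := by
  ext j
  simp [rkStack]

@[simp]
theorem rkStack_last : rkStack A b (Fin.last s) = b := by
  ext j
  simp [rkStack]

theorem rkStack_mul (M : Matrix (Fin s) (Fin s) ℝ) :
    rkStack A b * M = rkStack (A * M) (b ᵥ* M) := by
  ext i j
  induction i using Fin.lastCases <;>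
    simp [Matrix.mul_apply, Matrix.vecMul, dotProduct]

end rkStack

def RKAbsolutelyMonotonicAt {s : ℕ} (A : Matrix (Fin s) (Fin s) ℝ) (b : Fin s → ℝ) (r : ℝ) :
    Prop :=
  IsUnit (1 + r • A).det ∧
    (∀ i j, 0 ≤ (rkStack A b * (1 + r • A)⁻¹) i j) ∧
    ∀ i, 0 ≤ 1 - r * ((rkStack A b * (1 + r • A)⁻¹).mulVec (fun _ => 1)) i

theorem rkAbsolutelyMonotonicAt_of_mul_eq_one {s : ℕ} {A R : Matrix (Fin s) (Fin s) ℝ}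
    {b : Fin s → ℝ} {r : ℝ} (hR : (1 + r • A) * R = 1)
    (hAR : ∀ i j, 0 ≤ (A * R) i j) (hbR : ∀ j, 0 ≤ (b ᵥ* R) j)
    (hAR_sum : ∀ i, r * ((A * R) *ᵥ fun _ => 1) i ≤ 1)
    (hbR_sum : r * ((b ᵥ* R) ⬝ᵥ fun _ => 1) ≤ 1) :
    RKAbsolutelyMonotonicAt A b r := by
  have hK : rkStack A b * (1 + r • A)⁻¹ = rkStack (A * R) (b ᵥ* R) := by
    rw [Matrix.inv_eq_right_inv hR, rkStack_mul]
  refine ⟨Matrix.isUnit_det_of_right_inverse hR, fun i j => ?_, fun i => ?_⟩ <;> rw [hK]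
  · induction i using Fin.lastCases <;> simp [hAR, hbR]
  · induction i using Fin.lastCases with
    | last => simpa [Matrix.mulVec] using hbR_sum
    | cast i => simpa [Matrix.mulVec] using hAR_sum i

/-- The four-stage family of Theorem 5.2, with `b = essprkB γ`. -/
noncomputable def essprkA (γ : ℝ) : Matrix (Fin 4) (Fin 4) ℝ :=
  !![0, 0, 0, 0; 1/2, 0, 0, 0; 1/2, 1/2, 0, 0; γ, γ, γ, 0]

noncomputable def essprkB (γ : ℝ) : Fin 4 → ℝ :=
  ![(8 * γ - 1) / (12 * γ), 1 / 6, 1 / 6, 1 / (12 * γ)]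

def essprkResolvent (γ : ℝ) : Matrix (Fin 4) (Fin 4) ℝ :=
  !![1, 0, 0, 0; -1, 1, 0, 0; 0, -1, 1, 0; 0, 0, -2 * γ, 1]

theorem one_add_two_smul_essprkA_mul_essprkResolvent (γ : ℝ) :
    (1 + (2 : ℝ) • essprkA γ) * essprkResolvent γ = 1 := by
  ext i j
  fin_cases i <;> fin_cases j <;>
    simp [essprkA, essprkResolvent, Matrix.mul_apply, Fin.sum_univ_four, Matrix.one_apply]

theorem essprkA_mul_essprkResolvent (γ : ℝ) :
    essprkA γ * essprkResolvent γ = !![0, 0, 0, 0; 1/2, 0, 0, 0; 0, 1/2, 0, 0; 0, 0, γ, 0] := by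
  ext i j
  fin_cases i <;> fin_cases j <;>
    simp [essprkA, essprkResolvent, Matrix.mul_apply, Fin.sum_univ_four]

theorem essprkB_vecMul_essprkResolvent {γ : ℝ} (hγ : γ ≠ 0) :
    essprkB γ ᵥ* essprkResolvent γ = ![(6 * γ - 1) / (12 * γ), 0, 0, 1 / (12 * γ)] := by
  ext j
  fin_cases j <;>
    simp [essprkB, essprkResolvent, Matrix.vecMul, dotProduct, Fin.sum_univ_four] <;>
    field_simp <;> ring

/-- SSP property of the four-stage family of Theorem 5.2: the absolute
monotonicity conditions hold with r = 2. -/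
theorem essprk432_family_absolutely_monotonic (γ : ℝ)
    (h₁ : 1 / 6 ≤ γ) (h₂ : γ ≤ 1 / 2) :
    let A : Matrix (Fin 4) (Fin 4) ℝ :=
      !![0, 0, 0, 0; 1/2, 0, 0, 0; 1/2, 1/2, 0, 0; γ, γ, γ, 0]
    let b : Fin 4 → ℝ := ![(8 * γ - 1) / (12 * γ), 1 / 6, 1 / 6, 1 / (12 * γ)]
    let r : ℝ := 2
    let K := rkStack A b
    IsUnit (1 + r • A).det ∧
    (∀ i j, 0 ≤ (K * (1 + r • A)⁻¹) i j) ∧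
    (∀ i : Fin 5, 0 ≤ 1 - r * ((K * (1 + r • A)⁻¹).mulVec (fun _ => 1)) i) := by
  have hγ : 0 < γ := by linarith
  refine rkAbsolutelyMonotonicAt_of_mul_eq_one (A := essprkA γ) (b := essprkB γ)
    (one_add_two_smul_essprkA_mul_essprkResolvent γ) ?_ ?_ ?_ ?_
  · rw [essprkA_mul_essprkResolvent]
    intro i j
    fin_cases i <;> fin_cases j <;> simp [hγ.le]
  · rw [essprkB_vecMul_essprkResolvent hγ.ne']
    intro j
    fin_cases j <;> simp [hγ.le]
    exact div_nonneg (by linarith) (by positivity)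
  · rw [essprkA_mul_essprkResolvent]
    intro i
    fin_cases i <;> simp [Matrix.mulVec, dotProduct, Fin.sum_univ_four]
    linarith
  · rw [essprkB_vecMul_essprkResolvent hγ.ne']
    have hsum : (6 * γ - 1) / (12 * γ) + 1 / (12 * γ) = 1 / 2 := by
      field_simp
      ring
    simp only [dotProduct, Fin.sum_univ_four, Fin.isValue, cons_val_zero, cons_val_one, cons_val,
      mul_one, add_zero, hsum]
    norm_num
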